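/- arXiv:2503.09254 — 2 statements merged into one kernel-verified Lean document; each statement's English description precedes it below -/
import Mathlib

section
/- In the setting of the lifting lemma, each element g_i = m_i − nf_H(m_i) of the lifted basis satisfies in_{<'_ω}(g_i) = in_{<'_ω}(m_i); that is, the leading term of the lift equals the leading term of the corresponding generator of in_ω(I). -/
/-
Every element `m` of the reduced Gröbner basis `M` of the `ω`-homogeneous ideal `in_ω(I)`
is `ω`-homogeneous. Because `ω` lies in the closure of the Gröbner cone of `t`, for `v` in the cone
close to `ω` the top-weight exponents of `f ∈ I` for `v` are among those for `ω`, and `in_v(f)`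
lies in the monomial ideal `in_t(I)`; hence `in_ω(f)` has an exponent divisible by a leading
exponent of `H`, and no nonzero element of `in_ω(I)` is a combination of standard monomials.
For `g = m - nf_H(m)` this non-standard exponent of `in_ω(g)` must come from `m`, so
`in_ω(g) = m - r` with `r` the part of `nf_H(m)` of the weight of `m`; then `r ∈ in_ω(I)` is
standard, so `r = 0`. Finally `in_ω(g) = m` has the same `<'_ω`-leading term as `g`.
-/

open MvPolynomial

/-- A term ordering on the monomials (exponent vectors) of `k[x_1, …, x_n]`:
a strict total well-ordering compatible with addition of exponents. -/
structure TermOrder (n : ℕ) where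
  lt : (Fin n →₀ ℕ) → (Fin n →₀ ℕ) → Prop
  irrefl : ∀ a, ¬ lt a a
  trans : ∀ a b c, lt a b → lt b c → lt a c
  trichotomous : ∀ a b, lt a b ∨ a = b ∨ lt b a
  wf : WellFounded lt
  add_right : ∀ a b c, lt a b → lt (a + c) (b + c)

variable {n : ℕ}

/-- `α` is the exponent vector of the `t`-leading term of `f`. -/
def TermOrder.IsLeadExp {k : Type*} [CommSemiring k] (t : TermOrder n)
    (f : MvPolynomial (Fin n) k) (α : Fin n →₀ ℕ) : Prop :=
  α ∈ f.support ∧ ∀ β ∈ f.support, β ≠ α → t.lt β α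

open Classical in
/-- The exponent vector of the `t`-leading term of `f` (junk value `0` if none exists). -/
noncomputable def TermOrder.leadExp {k : Type*} [CommSemiring k] (t : TermOrder n)
    (f : MvPolynomial (Fin n) k) : Fin n →₀ ℕ :=
  if h : ∃ α, t.IsLeadExp f α then h.choose else 0

/-- The leading term `in_t(f)` of `f` with respect to the term ordering `t`. -/
noncomputable def TermOrder.leadTerm {k : Type*} [CommSemiring k] (t : TermOrder n)
    (f : MvPolynomial (Fin n) k) : MvPolynomial (Fin n) k :=
  monomial (t.leadExp f) (coeff (t.leadExp f) f)

/-- The initial ideal `in_t(I)` of `I` with respect to the term ordering `t`. -/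
noncomputable def initialIdealT {k : Type*} [CommSemiring k] (t : TermOrder n)
    (I : Ideal (MvPolynomial (Fin n) k)) : Ideal (MvPolynomial (Fin n) k) :=
  Ideal.span { p | ∃ f ∈ I, f ≠ 0 ∧ p = t.leadTerm f }

/-- The `ω`-weight `⟨ω, α⟩` of an exponent vector `α`. -/
noncomputable def wt (ω : Fin n → ℝ) (α : Fin n →₀ ℕ) : ℝ :=
  ∑ i, ω i * (α i : ℝ)

/-- The initial form `in_ω(f)`: the sum of the terms of `f` of maximal `ω`-weight. -/
noncomputable def initialForm {k : Type*} [CommSemiring k] (ω : Fin n → ℝ)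
    (f : MvPolynomial (Fin n) k) : MvPolynomial (Fin n) k :=
  ∑ α ∈ f.support.filter (fun α => ∀ β ∈ f.support, wt ω β ≤ wt ω α),
    monomial α (coeff α f)

/-- The generalized initial ideal `in_ω(I)` of `I` with respect to the weight vector `ω`. -/
noncomputable def initialIdealW {k : Type*} [CommSemiring k] (ω : Fin n → ℝ)
    (I : Ideal (MvPolynomial (Fin n) k)) : Ideal (MvPolynomial (Fin n) k) :=
  Ideal.span { p | ∃ f ∈ I, f ≠ 0 ∧ p = initialForm ω f }

/-- The refinement `<_ω` of the weight vector `ω` by the term ordering `t`: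
compare first by `ω`-weight, break ties with `t`. -/
def refineLt (ω : Fin n → ℝ) (t : TermOrder n) (α β : Fin n →₀ ℕ) : Prop :=
  wt ω α < wt ω β ∨ (wt ω α = wt ω β ∧ t.lt α β)

/-- `G` is a Gröbner basis of `I` w.r.t. `t`: `G ⊆ I` and the leading terms of the
elements of `G` generate the initial ideal `in_t(I)`. -/
def IsGroebnerBasis {k : Type*} [CommSemiring k] (t : TermOrder n)
    (I : Ideal (MvPolynomial (Fin n) k)) (G : Finset (MvPolynomial (Fin n) k)) : Prop :=
  (∀ g ∈ G, g ∈ I) ∧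
    Ideal.span ((fun g => t.leadTerm g) '' (G : Set (MvPolynomial (Fin n) k)))
      = initialIdealT t I

open Classical in
/-- `G` is the reduced (marked) Gröbner basis of `I` w.r.t. `t`:
a Gröbner basis that is minimal, monic and reduced. -/
def IsReducedGB {k : Type*} [CommSemiring k] (t : TermOrder n)
    (I : Ideal (MvPolynomial (Fin n) k)) (G : Finset (MvPolynomial (Fin n) k)) : Prop :=
  IsGroebnerBasis t I G ∧
  (∀ g ∈ G, coeff (t.leadExp g) g = 1) ∧
  (∀ g ∈ G, ∀ g' ∈ G, g ≠ g' → ∀ α ∈ g.support, ¬ t.leadExp g' ≤ α) ∧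
  (∀ g ∈ G, ¬ IsGroebnerBasis t I (G.erase g))

section

variable {k : Type*}

namespace TermOrder

variable (s : TermOrder n)

theorem exists_max {F : Finset (Fin n →₀ ℕ)} (hF : F.Nonempty) :
    ∃ α ∈ F, ∀ β ∈ F, β ≠ α → s.lt β α := by
  induction hF using Finset.Nonempty.cons_induction with
  | singleton a => exact ⟨a, by simp, by simp⟩
  | cons a F ha _ ih =>
    obtain ⟨α, hα, hmax⟩ := ih
    rcases s.trichotomous a α with h | rfl | h
    · refine ⟨α, Finset.mem_cons_of_mem hα, fun β hβ hne => ?_⟩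
      rcases Finset.mem_cons.1 hβ with rfl | hβ
      exacts [h, hmax β hβ hne]
    · exact absurd hα ha
    · refine ⟨a, Finset.mem_cons_self _ _, fun β hβ hne => ?_⟩
      rcases Finset.mem_cons.1 hβ with rfl | hβ
      · exact absurd rfl hne
      obtain rfl | hβα := eq_or_ne β α
      exacts [h, s.trans _ _ _ (hmax β hβ hβα) h]

theorem isLeadExp_leadExp [CommSemiring k] {f : MvPolynomial (Fin n) k} (hf : f ≠ 0) :
    s.IsLeadExp f (s.leadExp f) := by
  have h : ∃ α, s.IsLeadExp f α := s.exists_max (support_nonempty.2 hf)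
  rw [leadExp, dif_pos h]
  exact h.choose_spec

theorem leadExp_eq_of_isLeadExp [CommSemiring k] {f : MvPolynomial (Fin n) k}
    {α : Fin n →₀ ℕ} (h : s.IsLeadExp f α) : s.leadExp f = α := by
  have hlead := s.isLeadExp_leadExp (ne_zero_iff.2 ⟨α, mem_support_iff.1 h.1⟩)
  by_contra hne
  exact s.irrefl α (s.trans _ _ _ (hlead.2 α h.1 (Ne.symm hne)) (h.2 _ hlead.1 hne))

theorem zero_lt {c : Fin n →₀ ℕ} (hc : c ≠ 0) : s.lt 0 c := by
  rcases s.trichotomous 0 c with h | h | h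
  · exact h
  · exact absurd h.symm hc
  -- `c < 0` would make `0 > c > 2c > 3c > ⋯` an infinite descending chain.
  obtain ⟨_, ⟨j, rfl⟩, hmin⟩ := s.wf.has_min (Set.range fun j : ℕ => j • c) ⟨c, 1, one_smul _ _⟩
  refine absurd ?_ (hmin ((j + 1) • c) ⟨j + 1, rfl⟩)
  simpa [succ_nsmul, add_comm] using s.add_right c 0 (j • c) h

theorem lt_of_le_of_ne {α β : Fin n →₀ ℕ} (hle : α ≤ β) (hne : α ≠ β) : s.lt α β := by
  obtain ⟨c, rfl⟩ := exists_add_of_le hle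
  simpa [add_comm] using s.add_right 0 c α (s.zero_lt fun hc => hne (by simp [hc]))

theorem exists_leadExp_le_of_mem_span_leadTerm [CommSemiring k]
    {G : Set (MvPolynomial (Fin n) k)} {q : MvPolynomial (Fin n) k}
    (hq : q ∈ Ideal.span (s.leadTerm '' G)) {β : Fin n →₀ ℕ} (hβ : β ∈ q.support) :
    ∃ g ∈ G, s.leadExp g ≤ β := by
  have hle : Ideal.span (s.leadTerm '' G) ≤
      Ideal.span ((fun α => monomial α (1 : k)) '' (s.leadExp '' G)) := by
    refine Ideal.span_le.2 ?_
    rintro _ ⟨g, hg, rfl⟩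
    rw [leadTerm, ← mul_one (coeff _ g), ← C_mul_monomial]
    exact Ideal.mul_mem_left _ _ (Ideal.subset_span (Set.mem_image_of_mem _ ⟨g, hg, rfl⟩))
  obtain ⟨_, ⟨g, hg, rfl⟩, hgβ⟩ := mem_ideal_span_monomial_image.1 (hle hq) β hβ
  exact ⟨g, hg, hgβ⟩

end TermOrder

theorem wt_eq_weight (ω : Fin n → ℝ) (α : Fin n →₀ ℕ) : wt ω α = Finsupp.weight ω α := by
  simp [wt, Finsupp.weight_apply, Finsupp.sum_fintype, mul_comm]

theorem wt_add (ω : Fin n → ℝ) (α β : Fin n →₀ ℕ) : wt ω (α + β) = wt ω α + wt ω β := by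
  simp only [wt_eq_weight, map_add]

theorem continuous_wt (α : Fin n →₀ ℕ) : Continuous fun ω : Fin n → ℝ => wt ω α := by
  unfold wt
  fun_prop

def TermOrder.RefinesWeight (s : TermOrder n) (ω : Fin n → ℝ) : Prop :=
  ∀ α β, s.lt α β → wt ω α ≤ wt ω β

theorem TermOrder.refinesWeight_of_lt_eq_refineLt {s t : TermOrder n} {ω : Fin n → ℝ}
    (h : s.lt = refineLt ω t) : s.RefinesWeight ω := by
  intro α β hαβ
  rw [h] at hαβ
  exact hαβ.elim le_of_lt fun h => h.1.le

section CommSemiring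

variable [CommSemiring k] (ω : Fin n → ℝ)

theorem coeff_weightedHomogeneousComponent_wt (c : ℝ) (p : MvPolynomial (Fin n) k)
    (β : Fin n →₀ ℕ) :
    coeff β (weightedHomogeneousComponent ω c p) = if wt ω β = c then coeff β p else 0 := by
  classical
  rw [coeff_weightedHomogeneousComponent, wt_eq_weight]

theorem weightedHomogeneousComponent_monomial_mul (c : ℝ) (σ : Fin n →₀ ℕ) (a : k)
    (p : MvPolynomial (Fin n) k) :
    weightedHomogeneousComponent ω c (monomial σ a * p) =
      monomial σ a * weightedHomogeneousComponent ω (c - wt ω σ) p := by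
  ext β
  simp only [coeff_weightedHomogeneousComponent_wt, coeff_monomial_mul']
  by_cases h : σ ≤ β
  · obtain ⟨γ, rfl⟩ := exists_add_of_le h
    simp only [if_pos h, add_tsub_cancel_left, wt_add, eq_sub_iff_add_eq', mul_ite, mul_zero]
  · simp [h]

theorem coeff_initialForm (f : MvPolynomial (Fin n) k) (β : Fin n →₀ ℕ) :
    coeff β (initialForm ω f) =
      if ∀ γ ∈ f.support, wt ω γ ≤ wt ω β then coeff β f else 0 := by
  classical
  simp only [initialForm, coeff_sum, coeff_monomial, Finset.sum_ite_eq', Finset.mem_filter]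
  by_cases hβ : β ∈ f.support
  · simp [hβ]
  · simp [hβ, notMem_support_iff.1 hβ]

theorem mem_support_initialForm {f : MvPolynomial (Fin n) k} {β : Fin n →₀ ℕ} :
    β ∈ (initialForm ω f).support ↔
      β ∈ f.support ∧ ∀ γ ∈ f.support, wt ω γ ≤ wt ω β := by
  rw [mem_support_iff, coeff_initialForm]
  split_ifs with h
  · exact ⟨fun hβ => ⟨mem_support_iff.2 hβ, h⟩, fun hβ => mem_support_iff.1 hβ.1⟩
  · exact ⟨fun hβ => absurd rfl hβ, fun hβ => absurd hβ.2 h⟩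

@[simp]
theorem initialForm_zero : initialForm ω (0 : MvPolynomial (Fin n) k) = 0 := by
  simp [initialForm]

theorem initialForm_ne_zero {f : MvPolynomial (Fin n) k} (hf : f ≠ 0) : initialForm ω f ≠ 0 := by
  obtain ⟨δ, hδ, hmax⟩ := f.support.exists_max_image (wt ω) (support_nonempty.2 hf)
  exact ne_zero_iff.2 ⟨δ, mem_support_iff.1 ((mem_support_initialForm ω).2 ⟨hδ, hmax⟩)⟩

theorem initialForm_eq_weightedHomogeneousComponent {f : MvPolynomial (Fin n) k} {c : ℝ}
    (hle : ∀ γ ∈ f.support, wt ω γ ≤ c) {β : Fin n →₀ ℕ} (hβ : β ∈ f.support)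
    (hβc : wt ω β = c) :
    initialForm ω f = weightedHomogeneousComponent ω c f := by
  ext γ
  rw [coeff_initialForm, coeff_weightedHomogeneousComponent_wt]
  by_cases hγ : γ ∈ f.support
  · have hiff : (∀ γ' ∈ f.support, wt ω γ' ≤ wt ω γ) ↔ wt ω γ = c :=
      ⟨fun h => (hle γ hγ).antisymm (hβc ▸ h β hβ), fun h γ' hγ' => h ▸ hle γ' hγ'⟩
    simp only [hiff]
  · simp [notMem_support_iff.1 hγ]

theorem leadTerm_initialForm {s : TermOrder n} (hs : s.RefinesWeight ω)
    (f : MvPolynomial (Fin n) k) : s.leadTerm (initialForm ω f) = s.leadTerm f := by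
  obtain rfl | hf := eq_or_ne f 0
  · rw [initialForm_zero]
  have hlead := s.isLeadExp_leadExp hf
  have hmax : ∀ γ ∈ f.support, wt ω γ ≤ wt ω (s.leadExp f) := fun γ hγ =>
    (eq_or_ne γ (s.leadExp f)).elim (fun h => h ▸ le_rfl) fun h => hs _ _ (hlead.2 γ hγ h)
  have hin : s.IsLeadExp (initialForm ω f) (s.leadExp f) :=
    ⟨(mem_support_initialForm ω).2 ⟨hlead.1, hmax⟩,
      fun β hβ => hlead.2 β ((mem_support_initialForm ω).1 hβ).1⟩
  rw [TermOrder.leadTerm, TermOrder.leadTerm, s.leadExp_eq_of_isLeadExp hin, coeff_initialForm,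
    if_pos hmax]

theorem eventually_support_initialForm_subset (f : MvPolynomial (Fin n) k) :
    ∀ᶠ v in nhds ω, (initialForm v f).support ⊆ (initialForm ω f).support := by
  have hstrict : ∀ᶠ v in nhds ω, ∀ β ∈ f.support, ∀ γ ∈ f.support,
      wt ω β < wt ω γ → wt v β < wt v γ := by
    simp only [Filter.eventually_all_finset, Filter.eventually_imp_distrib_left]
    exact fun β _ γ _ h =>
      (continuous_wt β).continuousAt.eventually_lt (continuous_wt γ).continuousAt h
  filter_upwards [hstrict] with v hv δ hδ
  rw [mem_support_initialForm] at hδ ⊢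
  exact ⟨hδ.1, fun γ hγ => not_lt.1 fun hlt => (hv δ hδ.1 γ hγ hlt).not_ge (hδ.2 γ hγ)⟩

end CommSemiring

section InitialIdeal

variable [CommSemiring k] (ω : Fin n → ℝ) {I : Ideal (MvPolynomial (Fin n) k)}

theorem initialForm_mem_initialIdealW {f : MvPolynomial (Fin n) k} (hf : f ∈ I) :
    initialForm ω f ∈ initialIdealW ω I := by
  obtain rfl | hf0 := eq_or_ne f 0
  · rw [initialForm_zero]
    exact Ideal.zero_mem _
  · exact Ideal.subset_span ⟨f, hf, hf0, rfl⟩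

/- Stated for every weight `c`, with `f` of weight `≤ c`, so that the induction survives
multiplication by monomials, which shift weights. -/
theorem exists_mem_weightedHomogeneousComponent_eq {p : MvPolynomial (Fin n) k}
    (hp : p ∈ initialIdealW ω I) (c : ℝ) :
    ∃ f ∈ I, (∀ β ∈ f.support, wt ω β ≤ c) ∧
      weightedHomogeneousComponent ω c p = weightedHomogeneousComponent ω c f := by
  induction hp using Submodule.span_induction generalizing c with
  | mem q hq =>
    obtain ⟨f, hf, -, rfl⟩ := hq
    by_cases hc : ∃ β ∈ f.support, wt ω β = c ∧ ∀ γ ∈ f.support, wt ω γ ≤ wt ω β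
    · obtain ⟨β, hβ, rfl, hmax⟩ := hc
      refine ⟨f, hf, hmax, ?_⟩
      rw [initialForm_eq_weightedHomogeneousComponent ω hmax hβ rfl]
      exact (weightedHomogeneousComponent_isWeightedHomogeneous _ _).weightedHomogeneousComponent_same
    · refine ⟨0, I.zero_mem, by simp, ?_⟩
      ext β
      simp only [coeff_weightedHomogeneousComponent_wt, coeff_initialForm, map_zero, coeff_zero]
      split_ifs with hβc hmax <;> try rfl
      exact notMem_support_iff.1 fun hβ => hc ⟨β, hβ, hβc, hmax⟩
  | zero => exact ⟨0, I.zero_mem, by simp, rfl⟩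
  | add x y _ _ hx hy =>
    obtain ⟨f, hf, hfc, hfx⟩ := hx c
    obtain ⟨g, hg, hgc, hgy⟩ := hy c
    refine ⟨f + g, I.add_mem hf hg, fun β hβ => ?_, by simp only [map_add, hfx, hgy]⟩
    rcases Finset.mem_union.1 (support_add hβ) with h | h
    exacts [hfc β h, hgc β h]
  | smul a x _ hx =>
    choose F hF hFc hFx using hx
    refine ⟨∑ σ ∈ a.support, monomial σ (coeff σ a) * F (c - wt ω σ),
      I.sum_mem fun σ _ => I.mul_mem_left _ (hF _), fun β hβ => ?_, ?_⟩
    · obtain ⟨σ, -, hβσ⟩ := Finset.mem_biUnion.1 (support_sum hβ)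
      obtain ⟨γ, hγ, δ, hδ, rfl⟩ := Finset.mem_add.1 (support_mul _ _ hβσ)
      obtain rfl := Finset.mem_singleton.1 (support_monomial_subset hγ)
      have := hFc _ δ hδ
      rw [wt_add]
      linarith
    · conv_lhs => rw [smul_eq_mul, ← a.support_sum_monomial_coeff, Finset.sum_mul]
      simp only [map_sum, weightedHomogeneousComponent_monomial_mul, hFx]

theorem exists_initialForm_eq_weightedHomogeneousComponent {p : MvPolynomial (Fin n) k}
    (hp : p ∈ initialIdealW ω I) {c : ℝ} (hc : weightedHomogeneousComponent ω c p ≠ 0) :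
    ∃ f ∈ I, initialForm ω f = weightedHomogeneousComponent ω c p := by
  obtain ⟨f, hf, hfc, hfp⟩ := exists_mem_weightedHomogeneousComponent_eq ω hp c
  obtain ⟨β, hβ⟩ := ne_zero_iff.1 hc
  rw [hfp, coeff_weightedHomogeneousComponent_wt] at hβ
  split_ifs at hβ with hβc
  · exact ⟨f, hf, (initialForm_eq_weightedHomogeneousComponent ω hfc
      (mem_support_iff.2 hβ) hβc).trans hfp.symm⟩
  · exact absurd rfl hβ

theorem weightedHomogeneousComponent_mem_initialIdealW {p : MvPolynomial (Fin n) k}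
    (hp : p ∈ initialIdealW ω I) (c : ℝ) :
    weightedHomogeneousComponent ω c p ∈ initialIdealW ω I := by
  by_cases hc : weightedHomogeneousComponent ω c p = 0
  · rw [hc]
    exact Ideal.zero_mem _
  obtain ⟨f, hf, hfp⟩ := exists_initialForm_eq_weightedHomogeneousComponent ω hp hc
  exact hfp ▸ initialForm_mem_initialIdealW ω hf

end InitialIdeal

section Groebner

variable {s : TermOrder n}

theorem IsGroebnerBasis.exists_leadExp_le [CommSemiring k] {J : Ideal (MvPolynomial (Fin n) k)}
    {G : Finset (MvPolynomial (Fin n) k)} (hG : IsGroebnerBasis s J G)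
    {p : MvPolynomial (Fin n) k} (hp : p ∈ J) (hp0 : p ≠ 0) :
    ∃ g ∈ G, s.leadExp g ≤ s.leadExp p := by
  have hmem : s.leadTerm p ∈ Ideal.span (s.leadTerm '' G) :=
    hG.2 ▸ Ideal.subset_span ⟨p, hp, hp0, rfl⟩
  refine s.exists_leadExp_le_of_mem_span_leadTerm hmem ?_
  rw [TermOrder.leadTerm, mem_support_iff, coeff_monomial, if_pos rfl]
  exact mem_support_iff.1 (s.isLeadExp_leadExp hp0).1

theorem IsReducedGB.ne_zero [CommSemiring k] [Nontrivial k] {J : Ideal (MvPolynomial (Fin n) k)}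
    {M : Finset (MvPolynomial (Fin n) k)} (hM : IsReducedGB s J M)
    {m : MvPolynomial (Fin n) k} (hm : m ∈ M) : m ≠ 0 := by
  rintro rfl
  simpa using hM.2.1 0 hm

/- Removing the top-weight component of `m` would leave an element of `J` whose leading exponent
is a non-leading exponent of `m`; no leading exponent of `M` divides such an exponent. -/
theorem IsReducedGB.weightedHomogeneousComponent_leadExp_eq_self [CommRing k] [Nontrivial k]
    {J : Ideal (MvPolynomial (Fin n) k)} {M : Finset (MvPolynomial (Fin n) k)}
    (hM : IsReducedGB s J M) {ω : Fin n → ℝ}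
    (hJ : ∀ p ∈ J, ∀ c, weightedHomogeneousComponent ω c p ∈ J)
    {m : MvPolynomial (Fin n) k} (hm : m ∈ M) :
    weightedHomogeneousComponent ω (wt ω (s.leadExp m)) m = m := by
  set α := s.leadExp m
  set r := m - weightedHomogeneousComponent ω (wt ω α) m
  suffices hr0 : r = 0 from (sub_eq_zero.1 hr0).symm
  by_contra hr0
  have hrJ : r ∈ J := J.sub_mem (hM.1.1 m hm) (hJ m (hM.1.1 m hm) _)
  have hμ : s.leadExp r ∈ m.support ∧ s.leadExp r ≠ α := by
    have hμr := mem_support_iff.1 (s.isLeadExp_leadExp hr0).1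
    simp only [r, coeff_sub, coeff_weightedHomogeneousComponent_wt] at hμr
    split_ifs at hμr with hμα
    · exact absurd (sub_self _) hμr
    · exact ⟨mem_support_iff.2 (by simpa using hμr), fun h => hμα (congrArg (wt ω) h)⟩
  have hμα : s.lt (s.leadExp r) α := (s.isLeadExp_leadExp (hM.ne_zero hm)).2 _ hμ.1 hμ.2
  obtain ⟨m', hm', hle⟩ := hM.1.exists_leadExp_le hrJ hr0
  obtain rfl | hne := eq_or_ne m' m
  · exact s.irrefl _ (s.trans _ _ _ hμα (s.lt_of_le_of_ne hle hμ.2.symm))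
  · exact hM.2.2.1 m hm m' hm' hne.symm _ hμ.1 hle

end Groebner

/-- `p` is a combination of standard monomials of `in_t(I)`, like any normal form modulo `H`. -/
def IsStandard [CommSemiring k] (t : TermOrder n) (H : Finset (MvPolynomial (Fin n) k))
    (p : MvPolynomial (Fin n) k) : Prop :=
  ∀ α ∈ p.support, ∀ h ∈ H, ¬ t.leadExp h ≤ α

theorem IsStandard.mono [CommSemiring k] {t : TermOrder n} {H : Finset (MvPolynomial (Fin n) k)}
    {p q : MvPolynomial (Fin n) k} (hq : IsStandard t H q) (hpq : p.support ⊆ q.support) :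
    IsStandard t H p :=
  fun α hα => hq α (hpq hα)

section GroebnerCone

variable [CommSemiring k] {t : TermOrder n} {I : Ideal (MvPolynomial (Fin n) k)}
  {H : Finset (MvPolynomial (Fin n) k)} {ω : Fin n → ℝ}

/- Near `ω` the top-weight exponents of `f` can only become fewer; pick such a `v` in the Gröbner
cone, where `in_v(f)` lies in the monomial ideal `in_t(I)`. -/
theorem not_isStandard_initialForm (hH : IsGroebnerBasis t I H)
    (hω : ω ∈ closure {v | initialIdealW v I = initialIdealT t I})
    {f : MvPolynomial (Fin n) k} (hf : f ∈ I) (hf0 : f ≠ 0) :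
    ¬ IsStandard t H (initialForm ω f) := by
  obtain ⟨v, hv, hvI⟩ := mem_closure_iff_nhds.1 hω _ (eventually_support_initialForm_subset ω f)
  obtain ⟨δ, hδ⟩ := support_nonempty.2 (initialForm_ne_zero v hf0)
  have hmem : initialForm v f ∈ Ideal.span (t.leadTerm '' H) := by
    rw [hH.2, ← hvI]
    exact initialForm_mem_initialIdealW v hf
  obtain ⟨h, hh, hle⟩ := t.exists_leadExp_le_of_mem_span_leadTerm hmem hδ
  exact fun hstd => hstd δ (hv hδ) h hh hle

theorem eq_zero_of_mem_initialIdealW_of_isStandard (hH : IsGroebnerBasis t I H)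
    (hω : ω ∈ closure {v | initialIdealW v I = initialIdealT t I})
    {p : MvPolynomial (Fin n) k} (hp : p ∈ initialIdealW ω I) (hstd : IsStandard t H p) :
    p = 0 := by
  by_contra hp0
  obtain ⟨β, hβ⟩ := ne_zero_iff.1 hp0
  have hc : weightedHomogeneousComponent ω (wt ω β) p ≠ 0 :=
    ne_zero_iff.2 ⟨β, by rwa [coeff_weightedHomogeneousComponent_wt, if_pos rfl]⟩
  obtain ⟨f, hf, hfp⟩ := exists_initialForm_eq_weightedHomogeneousComponent ω hp hc
  have hf0 : f ≠ 0 := by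
    rintro rfl
    exact hc (by rw [← hfp, initialForm_zero])
  classical
  refine not_isStandard_initialForm hH hω hf hf0 (hfp ▸ hstd.mono ?_)
  rw [support_weightedHomogeneousComponent]
  exact Finset.filter_subset _ _

end GroebnerCone

theorem initialForm_sub_eq_of_isStandard [CommRing k] {t : TermOrder n}
    {I : Ideal (MvPolynomial (Fin n) k)} {H : Finset (MvPolynomial (Fin n) k)} {ω : Fin n → ℝ}
    (hH : IsGroebnerBasis t I H) (hω : ω ∈ closure {v | initialIdealW v I = initialIdealT t I})
    {m q : MvPolynomial (Fin n) k} (hm : m ∈ initialIdealW ω I) {c : ℝ}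
    (hmc : weightedHomogeneousComponent ω c m = m) (hq : IsStandard t H q) (hmq : m - q ∈ I) :
    initialForm ω (m - q) = m := by
  obtain hmq0 | hmq0 := eq_or_ne (m - q) 0
  · rw [sub_eq_zero] at hmq0
    rw [hmq0, sub_self, initialForm_zero,
      eq_zero_of_mem_initialIdealW_of_isStandard hH hω (hmq0 ▸ hm) hq]
  obtain ⟨δ, hδ, h, hh, hle⟩ : ∃ δ ∈ (initialForm ω (m - q)).support, ∃ h ∈ H, t.leadExp h ≤ δ := by
    simpa [IsStandard] using not_isStandard_initialForm hH hω hmq hmq0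
  rw [mem_support_initialForm] at hδ
  have hδm : coeff δ m ≠ 0 := by
    have hδq : coeff δ q = 0 := notMem_support_iff.1 fun hδq => hq δ hδq h hh hle
    simpa [hδq] using mem_support_iff.1 hδ.1
  have hδc : wt ω δ = c := by
    rw [← hmc, coeff_weightedHomogeneousComponent_wt] at hδm
    split_ifs at hδm with hδc
    exacts [hδc, absurd rfl hδm]
  have hin : initialForm ω (m - q) = m - weightedHomogeneousComponent ω c q := by
    rw [initialForm_eq_weightedHomogeneousComponent ω (hδc ▸ hδ.2) hδ.1 hδc, map_sub, hmc]
  have hqc : weightedHomogeneousComponent ω c q = 0 := by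
    refine eq_zero_of_mem_initialIdealW_of_isStandard hH hω ?_ (hq.mono ?_)
    · rw [← sub_sub_cancel m (weightedHomogeneousComponent ω c q), ← hin]
      exact sub_mem hm (initialForm_mem_initialIdealW ω hmq)
    · classical
      rw [support_weightedHomogeneousComponent]
      exact Finset.filter_subset _ _
  rw [hin, hqc, sub_zero]

end

theorem lift_leadTerm_eq_general {k : Type*} [Field k] (t t' t'' : TermOrder n)
    (I : Ideal (MvPolynomial (Fin n) k)) (H : Finset (MvPolynomial (Fin n) k))
    (hH : IsGroebnerBasis t I H)
    (ωr : Fin n → ℝ)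
    (hcone : ωr ∈ closure {v : Fin n → ℝ |
        (∀ i, 0 ≤ v i) ∧ initialIdealW v I = initialIdealT t I})
    (ht'' : t''.lt = refineLt ωr t')
    (M : Finset (MvPolynomial (Fin n) k))
    (hM : IsReducedGB t'' (initialIdealW ωr I) M)
    (nf : MvPolynomial (Fin n) k → MvPolynomial (Fin n) k)
    (hnf : ∀ m ∈ M, m - nf m ∈ I ∧
        ∀ α ∈ (nf m).support, ∀ h ∈ H, ¬ t.leadExp h ≤ α) :
    ∀ m ∈ M, t''.leadTerm (m - nf m) = t''.leadTerm m := by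
  intro m hm
  obtain ⟨hmI, hstd⟩ := hnf m hm
  have hhom := hM.weightedHomogeneousComponent_leadExp_eq_self
    (fun p hp c => weightedHomogeneousComponent_mem_initialIdealW ωr hp c) hm
  rw [← leadTerm_initialForm ωr (TermOrder.refinesWeight_of_lt_eq_refineLt ht''),
    initialForm_sub_eq_of_isStandard hH (closure_mono (fun v hv => hv.2) hcone) (hM.1.1 m hm)
      hhom hstd hmI]

/-- In the setting of the lifting lemma, each lifted element
`m - nf_H(m)` has the same `t''`-leading term as `m`. -/
theorem lift_leadTerm_eq {k : Type*} [Field k] (t t' t'' : TermOrder n)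
    (I : Ideal (MvPolynomial (Fin n) k)) (H : Finset (MvPolynomial (Fin n) k))
    (hH : IsGroebnerBasis t I H) (h0 : (0 : MvPolynomial (Fin n) k) ∉ H)
    (ω : Fin n → ℚ) (hω : ∀ i, 0 ≤ ω i)
    (ωr : Fin n → ℝ) (hωr : ωr = fun i => (ω i : ℝ))
    (hcone : ωr ∈ closure {v : Fin n → ℝ |
        (∀ i, 0 ≤ v i) ∧ initialIdealW v I = initialIdealT t I})
    (ht'' : t''.lt = refineLt ωr t')
    (M : Finset (MvPolynomial (Fin n) k))
    (hM : IsReducedGB t'' (initialIdealW ωr I) M)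
    (nf : MvPolynomial (Fin n) k → MvPolynomial (Fin n) k)
    (hnf : ∀ m ∈ M, m - nf m ∈ I ∧
        ∀ α ∈ (nf m).support, ∀ h ∈ H, ¬ t.leadExp h ≤ α) :
    ∀ m ∈ M, t''.leadTerm (m - nf m) = t''.leadTerm m :=
  lift_leadTerm_eq_general t t' t'' I H hH ωr hcone ht'' M hM nf hnf
end

section
/- Two term orderings <_1 and <_2 yield the same initial ideal of I, in_{<_1}(I) = in_{<_2}(I), if and only if they agree on the (finite) set of monomials occurring in the elements of the reduced Gröbner basis of I with respect to <_1 in the sense that in_{<_2}(g) = in_{<_1}(g) for every element g of that reduced Gröbner basis. -/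
open MvPolynomial

variable {n : ℕ}

/-! Both initial ideals are monomial ideals, and `in_{t₁}(I)` is generated by the leading
monomials of the reduced basis `G`. If the initial ideals agree, `in_{t₂}(g)` is divisible by some
`in_{t₁}(g')`; since `G` is reduced this forces `g' = g`, and a monomial of `g` divisible by
`in_{t₁}(g)` can only be `in_{t₁}(g)` itself. Conversely, if the leading terms agree on `G`, then
`in_{t₁}(I) ⊆ in_{t₂}(I)`, and for the reverse inclusion one divides `f ∈ I` by `G` with respect
to `t₁`: as long as `in_{t₂}(f) ≠ in_{t₁}(f)`, cancelling `in_{t₁}(f)` by a multiple of some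
`g ∈ G` lowers the `t₁`-leading exponent without touching `in_{t₂}(f)`, because the subtracted
multiple has the same leading exponent for both orders. -/

namespace TermOrder

variable (t : TermOrder n) {k : Type*}

theorem zero_lt_s14 {a : Fin n →₀ ℕ} (ha : a ≠ 0) : t.lt 0 a := by
  rcases t.trichotomous 0 a with h | h | h
  · exact h
  · exact absurd h.symm ha
  · -- otherwise `0 > a > 2 • a > ⋯` would be an infinite descending chain
    have hdesc : ∀ m : ℕ, t.lt ((m + 1) • a) (m • a) := fun m => by
      simpa [succ_nsmul, add_comm] using t.add_right a 0 (m • a) h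
    obtain ⟨_, ⟨m, rfl⟩, hmin⟩ := t.wf.has_min (Set.range fun m : ℕ => m • a) ⟨_, 0, rfl⟩
    exact (hmin _ ⟨m + 1, rfl⟩ (hdesc m)).elim

theorem lt_of_le_of_ne_s14 {a b : Fin n →₀ ℕ} (hle : a ≤ b) (hne : a ≠ b) : t.lt a b := by
  have hsub : b - a ≠ 0 := fun h => hne (le_antisymm hle (tsub_eq_zero_iff_le.mp h))
  simpa [tsub_add_cancel_of_le hle] using t.add_right 0 (b - a) a (t.zero_lt_s14 hsub)

theorem lt_add_left {a b : Fin n →₀ ℕ} (c : Fin n →₀ ℕ) (h : t.lt a b) : t.lt (c + a) (c + b) := by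
  simpa [add_comm c] using t.add_right a b c h

theorem exists_max_s14 {s : Finset (Fin n →₀ ℕ)} (hs : s.Nonempty) :
    ∃ m ∈ s, ∀ b ∈ s, b ≠ m → t.lt b m := by
  induction hs using Finset.Nonempty.cons_induction with
  | singleton a => exact ⟨a, by simp, fun b hb hba => absurd (Finset.mem_singleton.mp hb) hba⟩
  | cons a s _ _ ih =>
    obtain ⟨m, hm, hmax⟩ := ih
    rcases t.trichotomous a m with ham | rfl | hma
    · refine ⟨m, Finset.mem_cons_of_mem hm, fun b hb hbm => ?_⟩
      rcases Finset.mem_cons.mp hb with rfl | hb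
      exacts [ham, hmax b hb hbm]
    · exact ⟨a, Finset.mem_cons_self _ _, fun b hb hba =>
        (Finset.mem_cons.mp hb).elim (absurd · hba) (hmax b · hba)⟩
    · refine ⟨a, Finset.mem_cons_self _ _, fun b hb hba => ?_⟩
      rcases Finset.mem_cons.mp hb with rfl | hb
      · exact absurd rfl hba
      · by_cases hbm : b = m
        · exact hbm ▸ hma
        · exact t.trans _ _ _ (hmax b hb hbm) hma

section CommSemiring

variable [CommSemiring k] {t} {f g : MvPolynomial (Fin n) k} {α β : Fin n →₀ ℕ}

theorem IsLeadExp.unique (hα : t.IsLeadExp f α) (hβ : t.IsLeadExp f β) : α = β := by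
  by_contra hne
  exact t.irrefl _ (t.trans _ _ _ (hα.2 β hβ.1 (Ne.symm hne)) (hβ.2 α hα.1 hne))

variable (t) in
theorem isLeadExp_leadExp_s14 (hf : f ≠ 0) : t.IsLeadExp f (t.leadExp f) := by
  have hex : ∃ α, t.IsLeadExp f α := t.exists_max_s14 (support_nonempty.mpr hf)
  rw [leadExp, dif_pos hex]
  exact hex.choose_spec

theorem IsLeadExp.ne_zero (h : t.IsLeadExp f α) : f ≠ 0 := by
  rintro rfl
  simpa using h.1

theorem leadExp_eq (h : t.IsLeadExp f α) : t.leadExp f = α :=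
  (t.isLeadExp_leadExp_s14 h.ne_zero).unique h

theorem IsLeadExp.monomial_mul (hg : t.IsLeadExp g β) {c : k} (hc : c * coeff β g ≠ 0) :
    t.IsLeadExp (monomial α c * g) (α + β) := by
  classical
  refine ⟨by rwa [mem_support_iff, coeff_monomial_mul], fun γ hγ hne => ?_⟩
  obtain ⟨a, ha, b, hb, rfl⟩ := Finset.mem_add.mp (support_mul _ _ hγ)
  obtain rfl := Finset.mem_singleton.mp (support_monomial_subset ha)
  exact t.lt_add_left a (hg.2 b hb fun h => hne (h ▸ rfl))

variable (t) in
theorem support_leadTerm (hf : f ≠ 0) : (t.leadTerm f).support = {t.leadExp f} := by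
  classical
  rw [leadTerm, support_monomial, if_neg (mem_support_iff.mp (t.isLeadExp_leadExp_s14 hf).1)]

variable (t) in
theorem leadExp_mem_support_leadTerm (hf : f ≠ 0) : t.leadExp f ∈ (t.leadTerm f).support := by
  simp [t.support_leadTerm hf]

theorem leadExp_eq_of_leadTerm_eq {t₁ t₂ : TermOrder n} (hf : f ≠ 0)
    (h : t₂.leadTerm f = t₁.leadTerm f) : t₂.leadExp f = t₁.leadExp f := by
  simpa [t₁.support_leadTerm hf, t₂.support_leadTerm hf] using congrArg support h

theorem leadTerm_eq_of_leadExp_eq {t₁ t₂ : TermOrder n} (h : t₂.leadExp f = t₁.leadExp f) :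
    t₂.leadTerm f = t₁.leadTerm f := by
  rw [leadTerm, leadTerm, h]

variable (t) in
theorem eq_leadExp_of_leadExp_le (hα : α ∈ f.support) (hle : t.leadExp f ≤ α) :
    α = t.leadExp f := by
  have hlead := t.isLeadExp_leadExp_s14 (f := f) (by rintro rfl; simp at hα)
  by_contra hne
  exact t.irrefl _ (t.trans _ _ _ (t.lt_of_le_of_ne_s14 hle (Ne.symm hne)) (hlead.2 α hα hne))

end CommSemiring

section CommRing

variable [CommRing k] {t} {f g : MvPolynomial (Fin n) k} {α β : Fin n →₀ ℕ}

theorem IsLeadExp.sub_of_lt (hf : t.IsLeadExp f α) (hg : t.IsLeadExp g β) (hβα : t.lt β α) :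
    t.IsLeadExp (f - g) α := by
  classical
  have hlt : ∀ γ ∈ g.support, t.lt γ α := fun γ hγ => by
    by_cases hγβ : γ = β
    · exact hγβ ▸ hβα
    · exact t.trans _ _ _ (hg.2 γ hγ hγβ) hβα
  have hαg : α ∉ g.support := fun hα => t.irrefl _ (hlt α hα)
  refine ⟨?_, fun γ hγ hne => ?_⟩
  · rw [mem_support_iff, coeff_sub, notMem_support_iff.mp hαg, sub_zero]
    exact mem_support_iff.mp hf.1
  · rcases Finset.mem_union.mp (support_sub _ _ _ hγ) with hγ | hγ
    exacts [hf.2 γ hγ hne, hlt γ hγ]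

theorem lt_of_mem_support_sub (hf : t.IsLeadExp f α) (hg : t.IsLeadExp g α)
    (hc : coeff α f = coeff α g) {γ : Fin n →₀ ℕ} (hγ : γ ∈ (f - g).support) : t.lt γ α := by
  classical
  have hne : γ ≠ α := by
    rintro rfl
    rw [mem_support_iff, coeff_sub, hc, sub_self] at hγ
    exact hγ rfl
  rcases Finset.mem_union.mp (support_sub _ _ _ hγ) with hγ | hγ
  exacts [hf.2 γ hγ hne, hg.2 γ hγ hne]

end CommRing

end TermOrder

section InitialIdeal

variable {k : Type*} [CommSemiring k] {I : Ideal (MvPolynomial (Fin n) k)}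
  {G : Finset (MvPolynomial (Fin n) k)}

theorem leadTerm_mem_initialIdealT (t : TermOrder n) {f : MvPolynomial (Fin n) k} (hf : f ∈ I) :
    t.leadTerm f ∈ initialIdealT t I := by
  by_cases hf0 : f = 0
  · simp [hf0, TermOrder.leadTerm]
  · exact Ideal.subset_span ⟨f, hf, hf0, rfl⟩

theorem span_leadTerm_le_initialIdealT (t : TermOrder n) (hGI : ∀ g ∈ G, g ∈ I) :
    Ideal.span ((fun g => t.leadTerm g) '' (G : Set (MvPolynomial (Fin n) k)))
      ≤ initialIdealT t I :=
  Ideal.span_le.mpr (Set.image_subset_iff.mpr fun g hg => leadTerm_mem_initialIdealT t (hGI g hg))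

theorem IsGroebnerBasis.mem_initialIdealT_iff {t : TermOrder n} (hG : IsGroebnerBasis t I G)
    (hmonic : ∀ g ∈ G, coeff (t.leadExp g) g = 1) {p : MvPolynomial (Fin n) k} :
    p ∈ initialIdealT t I ↔ ∀ α ∈ p.support, ∃ g ∈ G, t.leadExp g ≤ α := by
  have himage : (fun g => t.leadTerm g) '' (G : Set (MvPolynomial (Fin n) k)) =
      (fun α => monomial α (1 : k)) '' (t.leadExp '' (G : Set (MvPolynomial (Fin n) k))) := by
    rw [Set.image_image]
    exact Set.image_congr fun g hg => by rw [TermOrder.leadTerm, hmonic g hg]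
  simp [← hG.2, himage, mem_ideal_span_monomial_image]

theorem IsGroebnerBasis.exists_leadExp_le_s14 {t : TermOrder n} (hG : IsGroebnerBasis t I G)
    (hmonic : ∀ g ∈ G, coeff (t.leadExp g) g = 1) {f : MvPolynomial (Fin n) k} (hf : f ∈ I)
    (hf0 : f ≠ 0) : ∃ g ∈ G, t.leadExp g ≤ t.leadExp f :=
  (hG.mem_initialIdealT_iff hmonic).1 (leadTerm_mem_initialIdealT t hf) _
    (t.leadExp_mem_support_leadTerm hf0)

end InitialIdeal

theorem IsGroebnerBasis.exists_leadExp_le_leadExp {k : Type*} [CommRing k] [Nontrivial k]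
    {I : Ideal (MvPolynomial (Fin n) k)} {G : Finset (MvPolynomial (Fin n) k)}
    {t₁ t₂ : TermOrder n} (hG : IsGroebnerBasis t₁ I G)
    (hmonic : ∀ g ∈ G, coeff (t₁.leadExp g) g = 1)
    (hagree : ∀ g ∈ G, t₂.leadExp g = t₁.leadExp g) (f : MvPolynomial (Fin n) k) :
    f ∈ I → f ≠ 0 → ∃ g ∈ G, t₁.leadExp g ≤ t₂.leadExp f := by
  induction f using (InvImage.wf t₁.leadExp t₁.wf).induction with
  | _ f ih =>
  intro hfI hf0
  obtain ⟨g, hgG, hle⟩ := hG.exists_leadExp_le_s14 hmonic hfI hf0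
  by_cases hsame : t₂.leadExp f = t₁.leadExp f
  · exact ⟨g, hgG, hsame ▸ hle⟩
  have hg0 : g ≠ 0 := fun h => by simpa [h] using hmonic g hgG
  have hf₁ := t₁.isLeadExp_leadExp_s14 hf0
  have hf₂ := t₂.isLeadExp_leadExp_s14 hf0
  set μ := t₁.leadExp f
  set q := monomial (μ - t₁.leadExp g) (coeff μ f) * g
  have hc : coeff μ f * coeff (t₁.leadExp g) g ≠ 0 := by
    rw [hmonic g hgG, mul_one]; exact mem_support_iff.mp hf₁.1
  have hq₁ : t₁.IsLeadExp q μ := by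
    have := (t₁.isLeadExp_leadExp_s14 hg0).monomial_mul (α := μ - t₁.leadExp g) hc
    rwa [tsub_add_cancel_of_le hle] at this
  have hq₂ : t₂.IsLeadExp q μ := by
    have := (t₂.isLeadExp_leadExp_s14 hg0).monomial_mul (α := μ - t₁.leadExp g) (hagree g hgG ▸ hc)
    rwa [hagree g hgG, tsub_add_cancel_of_le hle] at this
  have hr₂ : t₂.IsLeadExp (f - q) (t₂.leadExp f) :=
    hf₂.sub_of_lt hq₂ (hf₂.2 μ hf₁.1 (Ne.symm hsame))
  have hr0 : f - q ≠ 0 := hr₂.ne_zero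
  have hqμ : coeff μ q = coeff μ f := by
    simpa [q, hmonic g hgG, tsub_add_cancel_of_le hle] using
      coeff_monomial_mul (t₁.leadExp g) (μ - t₁.leadExp g) (coeff μ f) g
  have hr₁ : t₁.lt (t₁.leadExp (f - q)) μ :=
    TermOrder.lt_of_mem_support_sub hf₁ hq₁ hqμ.symm (t₁.isLeadExp_leadExp_s14 hr0).1
  obtain ⟨g', hg'G, hle'⟩ := ih (f - q) hr₁ (I.sub_mem hfI (I.mul_mem_left _ (hG.1 g hgG))) hr0
  exact ⟨g', hg'G, TermOrder.leadExp_eq hr₂ ▸ hle'⟩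

/-- Two term orderings give the same initial ideal of `I` iff they agree on
the reduced Gröbner basis of `I` w.r.t. the first, in the sense that the leading terms
coincide. -/
theorem initialIdeal_eq_iff_agree_on_redGB {k : Type*} [Field k] (t1 t2 : TermOrder n)
    (I : Ideal (MvPolynomial (Fin n) k)) (G : Finset (MvPolynomial (Fin n) k))
    (hG : IsReducedGB t1 I G) :
    initialIdealT t1 I = initialIdealT t2 I ↔
      ∀ g ∈ G, t2.leadTerm g = t1.leadTerm g := by
  obtain ⟨hGB, hmonic, hred, -⟩ := hG
  have hG0 : ∀ g ∈ G, g ≠ 0 := fun g hg h => by simpa [h] using hmonic g hg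
  constructor
  · intro hI g hg
    have hg₂ := (t2.isLeadExp_leadExp_s14 (hG0 g hg)).1
    obtain ⟨g', hg', hle⟩ := (hGB.mem_initialIdealT_iff hmonic).1
      (hI ▸ leadTerm_mem_initialIdealT t2 (hGB.1 g hg)) _
      (t2.leadExp_mem_support_leadTerm (hG0 g hg))
    obtain rfl : g' = g := by_contra fun hne => hred g hg g' hg' (Ne.symm hne) _ hg₂ hle
    exact TermOrder.leadTerm_eq_of_leadExp_eq (t1.eq_leadExp_of_leadExp_le hg₂ hle)
  · intro hagree
    have hexp : ∀ g ∈ G, t2.leadExp g = t1.leadExp g := fun g hg =>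
      TermOrder.leadExp_eq_of_leadTerm_eq (hG0 g hg) (hagree g hg)
    refine le_antisymm ?_ (Ideal.span_le.mpr ?_)
    · rw [← hGB.2, ← Set.image_congr hagree]
      exact span_leadTerm_le_initialIdealT t2 hGB.1
    · rintro _ ⟨f, hfI, hf0, rfl⟩
      obtain ⟨g, hg, hle⟩ := hGB.exists_leadExp_le_leadExp hmonic hexp f hfI hf0
      refine (hGB.mem_initialIdealT_iff hmonic).2 fun α hα => ⟨g, hg, ?_⟩
      rw [t2.support_leadTerm hf0, Finset.mem_singleton] at hα
      exact hα ▸ hle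
end
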